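/- (Second-derivative comparison at ξ1, from the proof of Lemma B.5) For every p* ∈ (8/9, 1], ξ1 < p*/(4 − 3p*); equivalently, 1/(ξ1 (1−ξ1)²) > 4(1−p*)/(p* (1−ξ1)³). -/
import Mathlib


/-- The smaller root of `3p·p* − p* − 2p² = 0`. -/
noncomputable def xi1 (pstar : ℝ) : ℝ :=
  3 * pstar / 4 - Real.sqrt ((3 * pstar / 4) ^ 2 - pstar / 2)

/-- Second-derivative comparison at `ξ1` from the proof of Lemma B.5:
for every `p* ∈ (8/9, 1]`, `ξ1 < p*/(4 − 3p*)`; equivalently,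
`1/(ξ1 (1−ξ1)²) > 4(1−p*)/(p* (1−ξ1)³)`. -/
theorem second_derivative_comparison_at_xi1
    (pstar : ℝ) (hpstar : pstar ∈ Set.Ioc (8 / 9 : ℝ) 1) :
    xi1 pstar < pstar / (4 - 3 * pstar)
    ∧ 4 * (1 - pstar) / (pstar * (1 - xi1 pstar) ^ 3)
        < 1 / (xi1 pstar * (1 - xi1 pstar) ^ 2) := by
  obtain ⟨h1, h2⟩ := hpstar
  have hp0 : 0 < pstar := by linarith
  have hd : (0:ℝ) < 4 - 3 * pstar := by linarith
  set s := Real.sqrt ((3 * pstar / 4) ^ 2 - pstar / 2) with hs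
  have hs0 : 0 ≤ s := Real.sqrt_nonneg _
  have hslt : s < 3 * pstar / 4 := by
    rw [hs]
    refine (Real.sqrt_lt' (by linarith)).mpr ?_
    nlinarith
  have hxi : xi1 pstar = 3 * pstar / 4 - s := rfl
  have hx0 : 0 < xi1 pstar := by rw [hxi]; linarith
  have hx34 : xi1 pstar ≤ 3 * pstar / 4 := by rw [hxi]; linarith
  have hx1 : xi1 pstar < 1 := by linarith
  have hmain : xi1 pstar < pstar / (4 - 3 * pstar) := by
    have : 3 * pstar / 4 < pstar / (4 - 3 * pstar) := by
      rw [div_lt_div_iff₀ (by norm_num) hd]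
      nlinarith
    linarith
  refine ⟨hmain, ?_⟩
  have hkey : xi1 pstar * (4 - 3 * pstar) < pstar := by
    exact (lt_div_iff₀ hd).mp hmain
  have h1x : 0 < 1 - xi1 pstar := by linarith
  rw [div_lt_div_iff₀ (by positivity) (by positivity)]
  nlinarith [sq_nonneg (1 - xi1 pstar), mul_pos h1x h1x, hkey,
    mul_pos (mul_pos h1x h1x) hx0]
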